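/- Let N ≥ 1 be an integer, η ∈ [0,1], and let Y be a Bernoulli(η) random variable. For q ∈ Δ^{N+1} define R(q) := Σ_{i=0}^{N} q_i · E[(Y − i/N)²], and set m := min_{j ∈ {0,…,N}} |η − j/N|. Then q ∈ Δ^{N+1} minimizes R over Δ^{N+1} if and only if q is supported on the set of nearest grid indices, i.e., q_i = 0 for every i with |η − i/N| > m. -/

import Mathlib

/-!
Since `Y² = Y`, the expected loss of the token `i` is `|η - i/N|² + η(1 - η)`, so the risk is
a linear function of `q` on the simplex. A linear function on the simplex attains its minimum
exactly at the weights supported on its smallest coefficients, and `x ↦ x² + η(1 - η)` is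
strictly increasing on `[0, ∞)`, so these are the nearest grid indices.
-/

open MeasureTheory Finset

lemma eq_indicator_of_forall_eq_zero_or_eq_one {Ω : Type*} {Y : Ω → ℝ}
    (hY01 : ∀ ω, Y ω = 0 ∨ Y ω = 1) : Y = {ω | Y ω = 1}.indicator fun _ => 1 := by
  funext ω
  rcases hY01 ω with h | h <;> simp [h]

section Bernoulli

variable {Ω : Type*} [MeasurableSpace Ω] {μ : Measure Ω} {Y : Ω → ℝ}

lemma integrable_of_forall_eq_zero_or_eq_one [IsFiniteMeasure μ] (hY : Measurable Y)
    (hY01 : ∀ ω, Y ω = 0 ∨ Y ω = 1) : Integrable Y μ := by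
  rw [eq_indicator_of_forall_eq_zero_or_eq_one hY01]
  exact (integrable_const 1).indicator (hY (measurableSet_singleton 1))

lemma integral_eq_measureReal_of_forall_eq_zero_or_eq_one (hY : Measurable Y)
    (hY01 : ∀ ω, Y ω = 0 ∨ Y ω = 1) : ∫ ω, Y ω ∂μ = μ.real {ω | Y ω = 1} := by
  have hs : MeasurableSet {ω | Y ω = 1} := hY (measurableSet_singleton 1)
  conv_lhs => rw [eq_indicator_of_forall_eq_zero_or_eq_one hY01]
  rw [integral_indicator_const _ hs, smul_eq_mul, mul_one]

lemma integral_sub_sq_of_forall_eq_zero_or_eq_one [IsProbabilityMeasure μ] (hY : Measurable Y)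
    (hY01 : ∀ ω, Y ω = 0 ∨ Y ω = 1) (c : ℝ) :
    ∫ ω, (Y ω - c) ^ 2 ∂μ = (∫ ω, Y ω ∂μ - c) ^ 2 + (∫ ω, Y ω ∂μ) * (1 - ∫ ω, Y ω ∂μ) := by
  have hlin : ∀ ω, (Y ω - c) ^ 2 = (1 - 2 * c) * Y ω + c ^ 2 := fun ω => by
    rcases hY01 ω with h | h <;> rw [h] <;> ring
  simp_rw [hlin]
  rw [integral_add ((integrable_of_forall_eq_zero_or_eq_one hY hY01).const_mul _)
    (integrable_const _), integral_const_mul, integral_const, probReal_univ, one_smul]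
  ring

end Bernoulli

section Simplex

variable {ι : Type*} [Fintype ι] [Nonempty ι] (f : ι → ℝ) {q : ι → ℝ}

lemma inf'_le_sum_mul_of_mem_stdSimplex (hq : q ∈ stdSimplex ℝ ι) :
    univ.inf' univ_nonempty f ≤ ∑ i, q i * f i :=
  calc univ.inf' univ_nonempty f = ∑ i, q i * univ.inf' univ_nonempty f := by
        rw [← sum_mul, hq.2, one_mul]
    _ ≤ ∑ i, q i * f i :=
        sum_le_sum fun i _ => mul_le_mul_of_nonneg_left (inf'_le f (mem_univ i)) (hq.1 i)

lemma isMinOn_stdSimplex_iff (hq : q ∈ stdSimplex ℝ ι) :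
    IsMinOn (fun p : ι → ℝ => ∑ i, p i * f i) (stdSimplex ℝ ι) q ↔
      ∀ i, univ.inf' univ_nonempty f < f i → q i = 0 := by
  classical
  obtain ⟨j, -, hj⟩ := exists_mem_eq_inf' (univ_nonempty (α := ι)) f
  set m := univ.inf' univ_nonempty f
  rw [isMinOn_iff]
  constructor
  · intro hmin i hi
    have hle : ∑ k, q k * f k ≤ m := by
      simpa [Pi.single_apply, hj] using hmin _ (single_mem_stdSimplex ℝ j)
    have hzero : ∑ k, q k * (f k - m) = 0 := by
      simp only [mul_sub, sum_sub_distrib, ← sum_mul, hq.2, one_mul]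
      linarith [inf'_le_sum_mul_of_mem_stdSimplex f hq]
    have hterm := (sum_eq_zero_iff_of_nonneg fun k _ => mul_nonneg (hq.1 k)
      (sub_nonneg.2 (inf'_le f (mem_univ k)))).1 hzero i (mem_univ i)
    exact (mul_eq_zero.1 hterm).resolve_right (sub_ne_zero.2 hi.ne')
  · intro hsupp p hp
    have hval : ∑ i, q i * f i = m := by
      calc ∑ i, q i * f i = ∑ i, q i * m := sum_congr rfl fun i _ => by
            rcases (inf'_le f (mem_univ i)).lt_or_eq with hlt | heq
            · simp [hsupp i hlt]
            · rw [← heq]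
        _ = m := by rw [← sum_mul, hq.2, one_mul]
    exact hval ▸ inf'_le_sum_mul_of_mem_stdSimplex f hp

end Simplex

lemma Finset.inf'_comp_lt_iff_of_strictMonoOn {ι α β : Type*} [LinearOrder α] [LinearOrder β]
    {s : Finset ι} (H : s.Nonempty) {g : ι → α} {h : α → β} {t : Set α}
    (hh : StrictMonoOn h t) (hg : ∀ i, g i ∈ t) (i : ι) :
    s.inf' H (h ∘ g) < h (g i) ↔ s.inf' H g < g i := by
  simp only [inf'_lt_iff, Function.comp_apply, hh.lt_iff_lt (hg _) (hg i)]

theorem tokenized_brier_minimizer_characterization_general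
    {Ω : Type*} [MeasurableSpace Ω] (μ : Measure Ω) [IsProbabilityMeasure μ]
    (Y : Ω → ℝ) (hY : Measurable Y) (hY01 : ∀ ω, Y ω = 0 ∨ Y ω = 1)
    (η : ℝ) (hη0 : 0 ≤ η)
    (hYη : μ {ω | Y ω = 1} = ENNReal.ofReal η)
    (N : ℕ)
    (q : Fin (N + 1) → ℝ) (hq0 : ∀ i, 0 ≤ q i) (hq1 : (∑ i, q i) = 1) :
    (∀ q' : Fin (N + 1) → ℝ, (∀ i, 0 ≤ q' i) → (∑ i, q' i) = 1 →
        (∑ i : Fin (N + 1), q i * ∫ ω, (Y ω - ((i : ℕ) : ℝ) / (N : ℝ)) ^ 2 ∂μ)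
          ≤ ∑ i : Fin (N + 1), q' i * ∫ ω, (Y ω - ((i : ℕ) : ℝ) / (N : ℝ)) ^ 2 ∂μ)
    ↔ (∀ i : Fin (N + 1),
        Finset.univ.inf' Finset.univ_nonempty
            (fun j : Fin (N + 1) => |η - ((j : ℕ) : ℝ) / (N : ℝ)|)
          < |η - ((i : ℕ) : ℝ) / (N : ℝ)| → q i = 0) := by
  set dist : Fin (N + 1) → ℝ := fun j => |η - ((j : ℕ) : ℝ) / (N : ℝ)|
  set risk : ℝ → ℝ := fun x => x ^ 2 + η * (1 - η)
  have hmean : ∫ ω, Y ω ∂μ = η := by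
    rw [integral_eq_measureReal_of_forall_eq_zero_or_eq_one hY hY01, measureReal_def, hYη,
      ENNReal.toReal_ofReal hη0]
  have hcost : ∀ i : Fin (N + 1),
      ∫ ω, (Y ω - ((i : ℕ) : ℝ) / (N : ℝ)) ^ 2 ∂μ = (risk ∘ dist) i := fun i => by
    simp [integral_sub_sq_of_forall_eq_zero_or_eq_one hY hY01, hmean, risk, dist, sq_abs]
  have hmono : StrictMonoOn risk (Set.Ici 0) := fun x hx y hy hxy => by
    simpa [risk] using pow_lt_pow_left₀ hxy hx two_ne_zero
  have key := isMinOn_stdSimplex_iff (risk ∘ dist) (q := q) ⟨hq0, hq1⟩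
  simp only [isMinOn_iff, stdSimplex, Set.mem_ofPred_eq, and_imp] at key
  simp only [hcost, key]
  exact forall_congr' fun i => imp_congr_left
    (inf'_comp_lt_iff_of_strictMonoOn _ hmono (fun _ => Set.mem_Ici.2 (abs_nonneg _)) i)

/-- For `Y ~ Bernoulli(η)`, `R(q) := Σ_i q_i E[(Y - i/N)²]`, and
`m := min_j |η - j/N|`, a point `q` of the probability simplex minimizes `R` over the
simplex iff `q` is supported on the nearest grid indices, i.e. `q_i = 0` whenever
`|η - i/N| > m`. -/
theorem tokenized_brier_minimizer_characterization
    {Ω : Type*} [MeasurableSpace Ω] (μ : Measure Ω) [IsProbabilityMeasure μ]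
    (Y : Ω → ℝ) (hY : Measurable Y) (hY01 : ∀ ω, Y ω = 0 ∨ Y ω = 1)
    (η : ℝ) (hη0 : 0 ≤ η) (hη1 : η ≤ 1)
    (hYη : μ {ω | Y ω = 1} = ENNReal.ofReal η)
    (N : ℕ) (hN : 1 ≤ N)
    (q : Fin (N + 1) → ℝ) (hq0 : ∀ i, 0 ≤ q i) (hq1 : (∑ i, q i) = 1) :
    (∀ q' : Fin (N + 1) → ℝ, (∀ i, 0 ≤ q' i) → (∑ i, q' i) = 1 →
        (∑ i : Fin (N + 1), q i * ∫ ω, (Y ω - ((i : ℕ) : ℝ) / (N : ℝ)) ^ 2 ∂μ)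
          ≤ ∑ i : Fin (N + 1), q' i * ∫ ω, (Y ω - ((i : ℕ) : ℝ) / (N : ℝ)) ^ 2 ∂μ)
    ↔ (∀ i : Fin (N + 1),
        Finset.univ.inf' Finset.univ_nonempty
            (fun j : Fin (N + 1) => |η - ((j : ℕ) : ℝ) / (N : ℝ)|)
          < |η - ((i : ℕ) : ℝ) / (N : ℝ)| → q i = 0) :=
  tokenized_brier_minimizer_characterization_general μ Y hY hY01 η hη0 hYη N q hq0 hq1
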